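/- Suppose conditions (1), (2), and (3) of the unwinding-preserving simulation hold between a concrete system M_c and an abstract system M_a with state relation α and step mapping ζ. Then for every concrete action list as_c and every s ∈ run_c(s₀, as_c), there exists a state σ ∈ run_a(σ₀, filterMap ζ as_c) with (s, σ) ∈ α, where filterMap ζ as_c is the abstract action list obtained by applying ζ to each action of as_c and discarding silent steps. -/

import Mathlib

/-- Multi-step execution. -/
def run {S A : Type*} (step : S → A → Set S) : S → List A → Set S
  | s, [] => {s}
  | s, a :: as => ⋃ s' ∈ step s a, run step s' as

section run

variable {S A : Type*} (step : S → A → Set S)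

@[simp]
theorem mem_run_nil {s t : S} : t ∈ run step s [] ↔ t = s := Iff.rfl

@[simp]
theorem mem_run_cons {s t : S} {a : A} {as : List A} :
    t ∈ run step s (a :: as) ↔ ∃ s' ∈ step s a, t ∈ run step s' as := by
  simp [run]

end run

theorem exists_mem_run_filterMap_of_simulation {S T Ac Aa : Type*}
    {step_c : S → Ac → Set S} {step_a : T → Aa → Set T}
    {α : Set (S × T)} {ζ : Ac → Option Aa}
    (silent : ∀ s σ a_c s', (s, σ) ∈ α → s' ∈ step_c s a_c → ζ a_c = none →
      (s', σ) ∈ α)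
    (visible : ∀ s σ a_c a_a s', (s, σ) ∈ α → s' ∈ step_c s a_c →
      ζ a_c = some a_a → ∃ σ' ∈ step_a σ a_a, (s', σ') ∈ α) :
    ∀ (as_c : List Ac) {s₁ : S} {σ₁ : T}, (s₁, σ₁) ∈ α →
      ∀ s ∈ run step_c s₁ as_c, ∃ σ ∈ run step_a σ₁ (as_c.filterMap ζ), (s, σ) ∈ α
  | [], _, σ₁, hα, s, hs => by
    rw [mem_run_nil] at hs
    exact ⟨σ₁, rfl, hs ▸ hα⟩
  | a :: as, s₁, σ₁, hα, s, hs => by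
    obtain ⟨s', hs', hrun⟩ := (mem_run_cons step_c).1 hs
    cases hζ : ζ a with
    | none =>
      rw [List.filterMap_cons_none hζ]
      exact exists_mem_run_filterMap_of_simulation silent visible as
        (silent s₁ σ₁ a s' hα hs' hζ) s hrun
    | some a_a =>
      obtain ⟨σ', hσ', hα'⟩ := visible s₁ σ₁ a a_a s' hα hs' hζ
      obtain ⟨σ, hσ, hασ⟩ :=
        exists_mem_run_filterMap_of_simulation silent visible as hα' s hrun
      rw [List.filterMap_cons_some hζ]
      exact ⟨σ, (mem_run_cons step_a).2 ⟨σ', hσ', hσ⟩, hασ⟩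

theorem stmt_7 {S T Ac Aa : Type*}
    (step_c : S → Ac → Set S) (s₀ : S)
    (step_a : T → Aa → Set T) (σ₀ : T)
    (α : Set (S × T)) (ζ : Ac → Option Aa)
    (cond1 : (s₀, σ₀) ∈ α)
    (cond2 : ∀ s σ a_c s', (s, σ) ∈ α → s' ∈ step_c s a_c → ζ a_c = none →
      (s', σ) ∈ α)
    (cond3 : ∀ s σ a_c a_a s', (s, σ) ∈ α → s' ∈ step_c s a_c →
      ζ a_c = some a_a → ∃ σ' ∈ step_a σ a_a, (s', σ') ∈ α) :
    ∀ (as_c : List Ac) (s : S), s ∈ run step_c s₀ as_c →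
      ∃ σ ∈ run step_a σ₀ (as_c.filterMap ζ), (s, σ) ∈ α :=
  fun as_c => exists_mem_run_filterMap_of_simulation cond2 cond3 as_c cond1
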